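/- arXiv:2001.02089 — 7 statements merged into one kernel-verified Lean document; each statement's English description precedes it below -/
import Mathlib

section
/- Let (𝔤*, [·,·], a) be a Lie algebra with nondegenerate symmetric bilinear form a, and let A be its infinitesimal Levi-Civita connection. On the Lie algebra 𝔤* ⋉ 𝔤* with bracket [(α,β),(α',β')] = ([α,β'] + [β,α'], [β,β']), equip the complete lift form a^c defined by a^c((α,β),(α',β')) = a(α,β') + a(β,α'). Then a^c is a symmetric nondegenerate bilinear form, and the infinitesimal Levi-Civita connection B of ([·,·]_{𝔤*⋉𝔤*}, a^c) is given by B_{(α,β)}(α',β') = (A_α β' + A_β α', A_β β'). -/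
/-!
Both components of `a^c` pair a first coordinate with a second one, so symmetry and
nondegeneracy of `a^c` reduce to those of `a`, tested on `(0, y)` and `(y, 0)`. Expanding
`2 a^c(B_p q, r)` by bilinearity gives exactly three Koszul expressions for `A`, namely at
`(α, β', δ')`, `(β, α', δ')` and `(β, β', δ)`, and their nine terms are the nine terms of the
Koszul expression of `B`.
-/

namespace LinearMap

variable {R M : Type*} [CommSemiring R] [AddCommMonoid M] [Module R M]

def completeLift (a : M →ₗ[R] M →ₗ[R] R) : M × M →ₗ[R] M × M →ₗ[R] R :=
  a.compl₁₂ (fst R M M) (snd R M M) + a.compl₁₂ (snd R M M) (fst R M M)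

@[simp]
theorem completeLift_apply (a : M →ₗ[R] M →ₗ[R] R) (p q : M × M) :
    a.completeLift p q = a p.1 q.2 + a p.2 q.1 :=
  rfl

theorem IsSymm.completeLift {a : M →ₗ[R] M →ₗ[R] R} (h : a.IsSymm) : a.completeLift.IsSymm :=
  isSymm_def.mpr fun p q => by
    simp only [RingHom.id_apply, completeLift_apply, ← h.eq p.1 q.2, ← h.eq p.2 q.1]
    exact add_comm _ _

theorem SeparatingLeft.completeLift {a : M →ₗ[R] M →ₗ[R] R} (h : a.SeparatingLeft) :
    a.completeLift.SeparatingLeft := fun p hp =>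
  Prod.ext (h p.1 fun y => by simpa using hp (0, y)) (h p.2 fun y => by simpa using hp (y, 0))

end LinearMap

/-- For nondegenerate `b` this determines `C`: it is then the infinitesimal Levi-Civita
connection of `(br, b)`. -/
def SatisfiesKoszulFormula {R V : Type*} [Semiring R]
    (b : V → V → R) (br C : V → V → V) : Prop :=
  ∀ x y z, 2 * b (C x y) z = b (br x y) z + b (br z x) y + b (br z y) x

namespace LieAlgebra

variable {R L : Type*} [CommRing R] [LieRing L] [LieAlgebra R L]

def semidirectBracket (p q : L × L) : L × L :=
  (⁅p.1, q.2⁆ + ⁅p.2, q.1⁆, ⁅p.2, q.2⁆)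

def liftedConnection (A : L →ₗ[R] L →ₗ[R] L) (p q : L × L) : L × L :=
  (A p.1 q.2 + A p.2 q.1, A p.2 q.2)

end LieAlgebra

open LieAlgebra in
theorem SatisfiesKoszulFormula.completeLift {R L : Type*} [CommRing R] [LieRing L]
    [LieAlgebra R L] {a : L →ₗ[R] L →ₗ[R] R} {A : L →ₗ[R] L →ₗ[R] L}
    (hK : SatisfiesKoszulFormula (fun x y => a x y) (fun x y => ⁅x, y⁆) (fun x y => A x y)) :
    SatisfiesKoszulFormula (fun p q => a.completeLift p q) semidirectBracket
      (liftedConnection A) := by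
  rintro ⟨α, β⟩ ⟨α', β'⟩ ⟨δ, δ'⟩
  simp only [LinearMap.completeLift_apply, semidirectBracket, liftedConnection, map_add,
    LinearMap.add_apply]
  linear_combination hK α β' δ' + hK β α' δ' + hK β β' δ

/-- On `𝔤* ⋉ 𝔤*` with the bracket `[(α,β),(α',β')] = ([α,β'] + [β,α'], [β,β'])`
and the complete lift form `a^c((α,β),(α',β')) = a(α,β') + a(β,α')`, the form
`a^c` is symmetric and nondegenerate, and the map
`B_{(α,β)}(α',β') = (A_α β' + A_β α', A_β β')` satisfies the Koszul formula,
i.e. it is the infinitesimal Levi-Civita connection of `([·,·]_{⋉}, a^c)`. -/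
theorem lifted_levi_civita_connection
    (L : Type*) [LieRing L] [LieAlgebra ℝ L]
    (a : L →ₗ[ℝ] L →ₗ[ℝ] ℝ)
    (hsymm : ∀ x y, a x y = a y x)
    (hnd : ∀ x, (∀ y, a x y = 0) → x = 0)
    (A : L →ₗ[ℝ] L →ₗ[ℝ] L)
    (hK : ∀ α β γ, 2 * a (A α β) γ = a ⁅α, β⁆ γ + a ⁅γ, α⁆ β + a ⁅γ, β⁆ α) :
    let br : L × L → L × L → L × L :=
      fun p q => (⁅p.1, q.2⁆ + ⁅p.2, q.1⁆, ⁅p.2, q.2⁆)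
    let ac : L × L → L × L → ℝ := fun p q => a p.1 q.2 + a p.2 q.1
    let B : L × L → L × L → L × L :=
      fun p q => (A p.1 q.2 + A p.2 q.1, A p.2 q.2)
    (∀ p q, ac p q = ac q p) ∧
    (∀ p, (∀ q, ac p q = 0) → p = 0) ∧
    (∀ p q r, 2 * ac (B p q) r = ac (br p q) r + ac (br r p) q + ac (br r q) p) :=
  ⟨(LinearMap.isSymm_def.mpr hsymm).completeLift.eq,
    LinearMap.SeparatingLeft.completeLift hnd,
    SatisfiesKoszulFormula.completeLift hK⟩
end

section
/- Let A be a bilinear map on a Lie algebra 𝔤* defining a torsion-free connection (A_α β − A_β α = [α,β]), and define its curvature R(α,β)γ = A_α A_β γ − A_β A_α γ − A_{[α,β]} γ. Let B_{(α,β)}(α',β') = (A_α β' + A_β α', A_β β') on 𝔤* ⋉ 𝔤* (with bracket [(α,β),(α',β')] = ([α,β'] + [β,α'], [β,β'])) and R^B its curvature. Then R^B((α,β),(α',β'))(α'',β'') = (R(α,β')β'' + R(β,α')β'' + R(β,β')α'', R(β,β')β''). -/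
/-- The curvature of the lifted connection `B` on `𝔤* ⋉ 𝔤*` is expressed in
terms of the curvature `R` of `A`:
`R^B((α,β),(α',β'))(α'',β'') = (R(α,β')β'' + R(β,α')β'' + R(β,β')α'', R(β,β')β'')`. -/
theorem lifted_connection_curvature
    (L : Type*) [LieRing L] [LieAlgebra ℝ L]
    (A : L →ₗ[ℝ] L →ₗ[ℝ] L)
    (htf : ∀ α β, A α β - A β α = ⁅α, β⁆) :
    let R : L → L → L → L :=
      fun α β γ => A α (A β γ) - A β (A α γ) - A ⁅α, β⁆ γ
    let br : L × L → L × L → L × L :=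
      fun p q => (⁅p.1, q.2⁆ + ⁅p.2, q.1⁆, ⁅p.2, q.2⁆)
    let B : L × L → L × L → L × L :=
      fun p q => (A p.1 q.2 + A p.2 q.1, A p.2 q.2)
    let RB : L × L → L × L → L × L → L × L :=
      fun p q r => B p (B q r) - B q (B p r) - B (br p q) r
    ∀ p q r : L × L,
      RB p q r = (R p.1 q.2 r.2 + R p.2 q.1 r.2 + R p.2 q.2 r.1, R p.2 q.2 r.2) := by
  intro R br B RB p q r
  simp only [RB, B, br, R, Prod.mk_sub_mk, Prod.mk.injEq, map_add, LinearMap.add_apply]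
  exact ⟨by abel, trivial⟩
end

section
/- With A a bilinear connection on a Lie algebra 𝔤*, define the covariant derivative of the curvature (∇_α R)(β,γ)δ = A_α(R(β,γ)δ) − R(A_α β, γ)δ − R(β, A_α γ)δ − R(β,γ)(A_α δ). Let B be the lifted connection on 𝔤* ⋉ 𝔤* and R^B its curvature. Then (∇^B_{(α,β)} R^B)((α',β'),(α'',β''))(α''',β''') = ((∇_α R)(β',β'')β''' + (∇_β R)(α',β'')β''' + (∇_β R)(β',α'')β''' + (∇_β R)(β',β'')α''', (∇_β R)(β',β'')β'''). -/
/-!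
Write `(α, β) ∈ 𝔤* ⋉ 𝔤*` as the dual number `β + εα` with `ε² = 0`. Then the semidirect
bracket and the lifted connection `B` are the `ε`-linear extensions of the bracket and of `A`,
so every expression built from them polynomially is the extension of the same expression
built from the bracket and `A`: its `ε`-free part is the original expression in the second
components, and its `ε`-part is the sum over all slots of the expression with that one slot
replaced by its first component (Leibniz rule). Applied to `R` and then to `∇R` this is the
theorem.
-/

namespace BilinearConnection

section Generic

variable {V : Type*} [Sub V]

def curvature (br A : V → V → V) (α β γ : V) : V :=
  A α (A β γ) - A β (A α γ) - A (br α β) γ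

def covDerivCurvature (br A : V → V → V) (α β γ δ : V) : V :=
  A α (curvature br A β γ δ) - curvature br A (A α β) γ δ - curvature br A β (A α γ) δ -
    curvature br A β γ (A α δ)

end Generic

/-- The extension of `f` to dual numbers, with `(α, β)` standing for `β + εα`. -/
def dualLift {V : Type*} [Add V] (f : V → V → V) (p q : V × V) : V × V :=
  (f p.1 q.2 + f p.2 q.1, f p.2 q.2)

variable {K L : Type*} [CommSemiring K] [LieRing L] [Module K L] (A : L →ₗ[K] L →ₗ[K] L)

local notation "bracket" => fun a b : L => ⁅a, b⁆
local notation "R" => curvature bracket (fun a b => A a b)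
local notation "∇R" => covDerivCurvature bracket (fun a b => A a b)

theorem curvature_add_left (α α' β γ : L) : R (α + α') β γ = R α β γ + R α' β γ := by
  simp only [curvature, map_add, LinearMap.add_apply, add_lie]
  abel

theorem curvature_add_middle (α β β' γ : L) : R α (β + β') γ = R α β γ + R α β' γ := by
  simp only [curvature, map_add, LinearMap.add_apply, lie_add]
  abel

theorem curvature_add_right (α β γ γ' : L) : R α β (γ + γ') = R α β γ + R α β γ' := by
  simp only [curvature, map_add]
  abel

theorem curvature_dualLift (p q r : L × L) :
    curvature (dualLift bracket) (dualLift fun a b => A a b) p q r =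
      (R p.1 q.2 r.2 + R p.2 q.1 r.2 + R p.2 q.2 r.1, R p.2 q.2 r.2) := by
  simp only [curvature, dualLift, Prod.mk_sub_mk, map_add, LinearMap.add_apply]
  congr 1
  abel

theorem covDerivCurvature_dualLift (p q r s : L × L) :
    covDerivCurvature (dualLift bracket) (dualLift fun a b => A a b) p q r s =
      (∇R p.1 q.2 r.2 s.2 + ∇R p.2 q.1 r.2 s.2 + ∇R p.2 q.2 r.1 s.2 + ∇R p.2 q.2 r.2 s.1,
        ∇R p.2 q.2 r.2 s.2) := by
  simp only [covDerivCurvature, curvature_dualLift]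
  simp only [dualLift, Prod.mk_sub_mk, map_add, curvature_add_left, curvature_add_middle,
    curvature_add_right]
  congr 1
  abel

end BilinearConnection

/-- The covariant derivative of the curvature of the lifted connection `B` on
`𝔤* ⋉ 𝔤*` is expressed in terms of the covariant derivative of the curvature
of `A`. -/
theorem lifted_connection_nabla_curvature
    (L : Type*) [LieRing L] [LieAlgebra ℝ L]
    (A : L →ₗ[ℝ] L →ₗ[ℝ] L) :
    let R : L → L → L → L :=
      fun α β γ => A α (A β γ) - A β (A α γ) - A ⁅α, β⁆ γ
    let nablaR : L → L → L → L → L :=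
      fun α β γ δ =>
        A α (R β γ δ) - R (A α β) γ δ - R β (A α γ) δ - R β γ (A α δ)
    let br : L × L → L × L → L × L :=
      fun p q => (⁅p.1, q.2⁆ + ⁅p.2, q.1⁆, ⁅p.2, q.2⁆)
    let B : L × L → L × L → L × L :=
      fun p q => (A p.1 q.2 + A p.2 q.1, A p.2 q.2)
    let RB : L × L → L × L → L × L → L × L :=
      fun p q r => B p (B q r) - B q (B p r) - B (br p q) r
    let nablaRB : L × L → L × L → L × L → L × L → L × L :=
      fun p q r s =>
        B p (RB q r s) - RB (B p q) r s - RB q (B p r) s - RB q r (B p s)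
    ∀ p q r s : L × L,
      nablaRB p q r s =
        (nablaR p.1 q.2 r.2 s.2 + nablaR p.2 q.1 r.2 s.2 +
           nablaR p.2 q.2 r.1 s.2 + nablaR p.2 q.2 r.2 s.1,
         nablaR p.2 q.2 r.2 s.2) :=
  fun p q r s => BilinearConnection.covDerivCurvature_dualLift A p q r s
end

section
/- Let (𝔤, [·,·], ã) be a Lie algebra with nondegenerate symmetric bilinear form ã and infinitesimal Levi-Civita connection A. Say (𝔤,[·,·],ã) is a pseudo-Riemannian Lie algebra if [A_X Y, Z] + [X, A_Z Y] = 0 for all X,Y,Z. On the semidirect product 𝔤 ⋊ 𝔤 with bracket [(X,Y),(X',Y')] = ([X,X'],[X,Y']+[Y,X']) and complete form ã^c((X,Y),(X',Y')) = ã(X,Y') + ã(Y,X'), the infinitesimal Levi-Civita connection is B_{(X,Y)}(X',Y') = (A_X X', A_X Y' + A_Y X'). Then (𝔤,[·,·],ã) is a pseudo-Riemannian Lie algebra if and only if (𝔤 ⋊ 𝔤, [·,·]_{𝔤⋊𝔤}, ã^c) is a pseudo-Riemannian Lie algebra. -/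
/-!
The defect `[B_p q, r] + [p, B_r q]` of the lifted connection on `𝔤 ⋊ 𝔤` is computed
componentwise: its first component is the defect of `A` at `(X, Y, Z)`, and its second is a
sum of three defects of `A`, one for each way of taking exactly one argument from the second
factor. Hence it vanishes when `A`'s does, and restricting to `𝔤 × 0` gives the converse.
-/

section PseudoRiemannian

variable {M : Type*} [Add M]

def pseudoRiemannianDefect (br C : M → M → M) (x y z : M) : M :=
  br (C x y) z + br x (C z y)

def IsPseudoRiemannian [Zero M] (br C : M → M → M) : Prop :=
  ∀ x y z, pseudoRiemannianDefect br C x y z = 0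

end PseudoRiemannian

namespace Semidirect

variable {R L : Type*} [CommSemiring R] [LieRing L] [Module R L]

def bracket (p q : L × L) : L × L :=
  (⁅p.1, q.1⁆, ⁅p.1, q.2⁆ + ⁅p.2, q.1⁆)

def liftConnection (A : L →ₗ[R] L →ₗ[R] L) (p q : L × L) : L × L :=
  (A p.1 q.1, A p.1 q.2 + A p.2 q.1)

variable (A : L →ₗ[R] L →ₗ[R] L)

local notation "δ" => pseudoRiemannianDefect (fun x y : L => ⁅x, y⁆) (fun x y => A x y)

theorem pseudoRiemannianDefect_liftConnection (p q r : L × L) :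
    pseudoRiemannianDefect bracket (liftConnection A) p q r =
      (δ p.1 q.1 r.1, δ p.1 q.1 r.2 + δ p.1 q.2 r.1 + δ p.2 q.1 r.1) := by
  ext
  · rfl
  · simp only [pseudoRiemannianDefect, bracket, liftConnection, Prod.snd_add,
      lie_add, add_lie]
    abel

theorem isPseudoRiemannian_liftConnection_iff :
    IsPseudoRiemannian bracket (liftConnection A) ↔
      IsPseudoRiemannian (fun x y : L => ⁅x, y⁆) (fun x y => A x y) := by
  constructor
  · intro h x y z
    exact congrArg Prod.fst (h (x, 0) (y, 0) (z, 0))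
  · intro h p q r
    simp [pseudoRiemannianDefect_liftConnection, h _ _ _]

end Semidirect

theorem semidirect_pseudo_riemannian_iff_general
    (L : Type*) [LieRing L] [LieAlgebra ℝ L]
    (A : L →ₗ[ℝ] L →ₗ[ℝ] L) :
    let br : L × L → L × L → L × L :=
      fun p q => (⁅p.1, q.1⁆, ⁅p.1, q.2⁆ + ⁅p.2, q.1⁆)
    let B : L × L → L × L → L × L :=
      fun p q => (A p.1 q.1, A p.1 q.2 + A p.2 q.1)
    ((∀ X Y Z : L, ⁅A X Y, Z⁆ + ⁅X, A Z Y⁆ = 0) ↔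
      (∀ p q r : L × L, br (B p q) r + br p (B r q) = 0)) :=
  (Semidirect.isPseudoRiemannian_liftConnection_iff A).symm

/-- `(𝔤,[·,·],ã)` is a pseudo-Riemannian Lie algebra if and only if the
semidirect product `𝔤 ⋊ 𝔤` with the complete lift form `ã^c` and the lifted
infinitesimal Levi-Civita connection
`B_{(X,Y)}(X',Y') = (A_X X', A_X Y' + A_Y X')` is a pseudo-Riemannian Lie
algebra. -/
theorem semidirect_pseudo_riemannian_iff
    (L : Type*) [LieRing L] [LieAlgebra ℝ L]
    (a : L →ₗ[ℝ] L →ₗ[ℝ] ℝ)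
    (hsymm : ∀ x y, a x y = a y x)
    (hnd : ∀ x, (∀ y, a x y = 0) → x = 0)
    (A : L →ₗ[ℝ] L →ₗ[ℝ] L)
    (hK : ∀ x y z, 2 * a (A x y) z = a ⁅x, y⁆ z + a ⁅z, x⁆ y + a ⁅z, y⁆ x) :
    let br : L × L → L × L → L × L :=
      fun p q => (⁅p.1, q.1⁆, ⁅p.1, q.2⁆ + ⁅p.2, q.1⁆)
    let B : L × L → L × L → L × L :=
      fun p q => (A p.1 q.1, A p.1 q.2 + A p.2 q.1)
    ((∀ X Y Z : L, ⁅A X Y, Z⁆ + ⁅X, A Z Y⁆ = 0) ↔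
      (∀ p q r : L × L, br (B p q) r + br p (B r q) = 0)) :=
  semidirect_pseudo_riemannian_iff_general L A
end

section
/- Let 𝔤 = ℝ³ with orthonormal basis (e₁,e₂,e₃), inner product the standard Euclidean one, and Lie bracket [e₁,e₂] = λe₃, [e₁,e₃] = −λe₂, [e₂,e₃] = 0 for a fixed λ < 0. Then 𝔤 is a pseudo-Riemannian Lie algebra: its infinitesimal Levi-Civita connection A satisfies [A_X Y, Z] + [X, A_Z Y] = 0 for all X,Y,Z ∈ 𝔤. -/
/-!
Put `u = e 0` and `D = ad u`. The structure constants say that `D` is `b`-skew and that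
`⁅x, y⁆ = ⟨x, u⟩ D y - ⟨y, u⟩ D x`, i.e. the algebra is `ℝ u ⋉ u^⊥` with `u^⊥` abelian.
Feeding this into the Koszul formula gives `A_x y = ⟨x, u⟩ D y`. Since `D y ⊥ u`, also
`⁅x, D y⁆ = ⟨x, u⟩ D² y`, so the two terms of `⁅A_x y, z⁆ + ⁅x, A_z y⁆` are
`∓ ⟨x, u⟩ ⟨z, u⟩ D² y` and cancel.
-/

section MetricLieAlgebra

variable {K L : Type*} [CommRing K] [LieRing L] [LieAlgebra K L]
  {b : L →ₗ[K] L →ₗ[K] K} {u : L}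

theorem koszul_eq_two_mul (hskew : ∀ v w, b ⁅u, v⁆ w = -b ⁅u, w⁆ v)
    (hlie : ∀ x y, ⁅x, y⁆ = b x u • ⁅u, y⁆ - b y u • ⁅u, x⁆) (x y z : L) :
    b ⁅x, y⁆ z + b ⁅z, x⁆ y + b ⁅z, y⁆ x = 2 * (b x u * b ⁅u, y⁆ z) := by
  simp only [hlie x y, hlie z x, hlie z y, map_sub, map_smul, LinearMap.sub_apply,
    LinearMap.smul_apply, smul_eq_mul, hskew z y, hskew z x, hskew y x]
  ring

theorem lie_lie_eq_smul_lie_lie (hskew : ∀ v w, b ⁅u, v⁆ w = -b ⁅u, w⁆ v)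
    (hlie : ∀ x y, ⁅x, y⁆ = b x u • ⁅u, y⁆ - b y u • ⁅u, x⁆) (x y : L) :
    ⁅x, ⁅u, y⁆⁆ = b x u • ⁅u, ⁅u, y⁆⁆ := by
  have hperp : b ⁅u, y⁆ u = 0 := by
    rw [hskew, lie_self, map_zero, LinearMap.zero_apply, neg_zero]
  rw [hlie x, hperp, zero_smul, sub_zero]

theorem leviCivita_apply_eq [NoZeroDivisors K] [NeZero (2 : K)] (hb : b.SeparatingLeft)
    (hskew : ∀ v w, b ⁅u, v⁆ w = -b ⁅u, w⁆ v)
    (hlie : ∀ x y, ⁅x, y⁆ = b x u • ⁅u, y⁆ - b y u • ⁅u, x⁆) {A : L →ₗ[K] L →ₗ[K] L}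
    (hA : ∀ x y z, 2 * b (A x y) z = b ⁅x, y⁆ z + b ⁅z, x⁆ y + b ⁅z, y⁆ x) (x y : L) :
    A x y = b x u • ⁅u, y⁆ := by
  refine sub_eq_zero.mp (hb _ fun z => ?_)
  have hkoszul := hA x y z
  rw [koszul_eq_two_mul hskew hlie] at hkoszul
  rw [map_sub, LinearMap.sub_apply, mul_left_cancel₀ two_ne_zero hkoszul, map_smul,
    LinearMap.smul_apply, smul_eq_mul, sub_self]

theorem lie_leviCivita_add_lie_leviCivita_eq_zero [NoZeroDivisors K] [NeZero (2 : K)]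
    (hb : b.SeparatingLeft) (hskew : ∀ v w, b ⁅u, v⁆ w = -b ⁅u, w⁆ v)
    (hlie : ∀ x y, ⁅x, y⁆ = b x u • ⁅u, y⁆ - b y u • ⁅u, x⁆) {A : L →ₗ[K] L →ₗ[K] L}
    (hA : ∀ x y z, 2 * b (A x y) z = b ⁅x, y⁆ z + b ⁅z, x⁆ y + b ⁅z, y⁆ x) (x y z : L) :
    ⁅A x y, z⁆ + ⁅x, A z y⁆ = 0 := by
  rw [leviCivita_apply_eq hb hskew hlie hA, leviCivita_apply_eq hb hskew hlie hA, smul_lie,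
    lie_smul, ← lie_skew, lie_lie_eq_smul_lie_lie hskew hlie z y,
    lie_lie_eq_smul_lie_lie hskew hlie x y, smul_neg, smul_smul, smul_smul, mul_comm,
    neg_add_cancel]

end MetricLieAlgebra

section Orthonormal

variable {K L ι : Type*} [CommRing K] [AddCommGroup L] [Module K L] [Fintype ι]
  {b : L →ₗ[K] L →ₗ[K] K} {e : ι → L}

theorem exists_sum_smul_eq_of_span_eq_top (hspan : Submodule.span K (Set.range e) = ⊤)
    (x : L) : ∃ c : ι → K, ∑ i, c i • e i = x :=
  (Submodule.mem_span_range_iff_exists_fun K).mp (hspan ▸ Submodule.mem_top)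

theorem apply_sum_smul_of_orthonormal [DecidableEq ι]
    (horth : ∀ i j, b (e i) (e j) = if i = j then 1 else 0) (c : ι → K) (j : ι) :
    b (∑ i, c i • e i) (e j) = c j := by
  simp [map_sum, horth]

theorem separatingLeft_of_orthonormal [DecidableEq ι]
    (horth : ∀ i j, b (e i) (e j) = if i = j then 1 else 0)
    (hspan : Submodule.span K (Set.range e) = ⊤) : b.SeparatingLeft := by
  intro x hx
  obtain ⟨c, rfl⟩ := exists_sum_smul_eq_of_span_eq_top hspan x
  have hc : c = 0 := funext fun j => by rw [← apply_sum_smul_of_orthonormal horth c j, hx]; rfl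
  simp [hc]

end Orthonormal

namespace ExampleR3

variable {K L : Type*} [CommRing K] [LieRing L] [LieAlgebra K L]
  {b : L →ₗ[K] L →ₗ[K] K} {e : Fin 3 → L} {lam : K}

theorem ad_skew (horth : ∀ i j, b (e i) (e j) = if i = j then 1 else 0)
    (hspan : Submodule.span K (Set.range e) = ⊤)
    (h12 : ⁅e 0, e 1⁆ = lam • e 2) (h13 : ⁅e 0, e 2⁆ = (-lam) • e 1) (v w : L) :
    b ⁅e 0, v⁆ w = -b ⁅e 0, w⁆ v := by
  obtain ⟨c, rfl⟩ := exists_sum_smul_eq_of_span_eq_top hspan v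
  obtain ⟨d, rfl⟩ := exists_sum_smul_eq_of_span_eq_top hspan w
  simp only [Fin.sum_univ_three, lie_add, lie_smul, lie_self, h12, h13, smul_zero, zero_add,
    neg_smul, smul_neg, map_add, map_smul, map_neg, LinearMap.add_apply, LinearMap.smul_apply,
    LinearMap.neg_apply, horth, Fin.reduceEq, ↓reduceIte, smul_eq_mul, mul_zero,
    mul_one]
  ring

theorem lie_eq (horth : ∀ i j, b (e i) (e j) = if i = j then 1 else 0)
    (hspan : Submodule.span K (Set.range e) = ⊤)
    (h12 : ⁅e 0, e 1⁆ = lam • e 2) (h13 : ⁅e 0, e 2⁆ = (-lam) • e 1) (h23 : ⁅e 1, e 2⁆ = 0)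
    (x y : L) : ⁅x, y⁆ = b x (e 0) • ⁅e 0, y⁆ - b y (e 0) • ⁅e 0, x⁆ := by
  obtain ⟨c, rfl⟩ := exists_sum_smul_eq_of_span_eq_top hspan x
  obtain ⟨d, rfl⟩ := exists_sum_smul_eq_of_span_eq_top hspan y
  have h21 : ⁅e 1, e 0⁆ = (-lam) • e 2 := by rw [← lie_skew, h12, neg_smul]
  have h31 : ⁅e 2, e 0⁆ = lam • e 1 := by rw [← lie_skew, h13, neg_smul, neg_neg]
  have h32 : ⁅e 2, e 1⁆ = 0 := by rw [← lie_skew, h23, neg_zero]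
  rw [apply_sum_smul_of_orthonormal horth, apply_sum_smul_of_orthonormal horth]
  simp only [Fin.sum_univ_three, lie_add, add_lie, lie_smul, smul_lie, lie_self,
    h12, h13, h23, h21, h31, h32]
  module

end ExampleR3

theorem example_R3_pseudo_riemannian_general
    (L : Type*) [LieRing L] [LieAlgebra ℝ L]
    (b : L →ₗ[ℝ] L →ₗ[ℝ] ℝ) (e : Fin 3 → L) (lam : ℝ)
    (horth : ∀ i j, b (e i) (e j) = if i = j then 1 else 0)
    (hspan : Submodule.span ℝ (Set.range e) = ⊤)
    (h12 : ⁅e 0, e 1⁆ = lam • e 2)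
    (h13 : ⁅e 0, e 2⁆ = (-lam) • e 1)
    (h23 : ⁅e 1, e 2⁆ = 0)
    (A : L →ₗ[ℝ] L →ₗ[ℝ] L)
    (hK : ∀ x y z, 2 * b (A x y) z = b ⁅x, y⁆ z + b ⁅z, x⁆ y + b ⁅z, y⁆ x) :
    ∀ X Y Z : L, ⁅A X Y, Z⁆ + ⁅X, A Z Y⁆ = 0 :=
  lie_leviCivita_add_lie_leviCivita_eq_zero (separatingLeft_of_orthonormal horth hspan)
    (ExampleR3.ad_skew horth hspan h12 h13) (ExampleR3.lie_eq horth hspan h12 h13 h23) hK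

/-- `ℝ³` with orthonormal basis `e₁,e₂,e₃`, Euclidean inner product, and
bracket `[e₁,e₂] = λe₃`, `[e₁,e₃] = −λe₂`, `[e₂,e₃] = 0` (`λ < 0`) is a
pseudo-Riemannian Lie algebra: `[A_X Y, Z] + [X, A_Z Y] = 0` for all
`X, Y, Z`. -/
theorem example_R3_pseudo_riemannian
    (L : Type*) [LieRing L] [LieAlgebra ℝ L]
    (b : L →ₗ[ℝ] L →ₗ[ℝ] ℝ) (e : Fin 3 → L) (lam : ℝ) (hlam : lam < 0)
    (horth : ∀ i j, b (e i) (e j) = if i = j then 1 else 0)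
    (hspan : Submodule.span ℝ (Set.range e) = ⊤)
    (h12 : ⁅e 0, e 1⁆ = lam • e 2)
    (h13 : ⁅e 0, e 2⁆ = (-lam) • e 1)
    (h23 : ⁅e 1, e 2⁆ = 0)
    (A : L →ₗ[ℝ] L →ₗ[ℝ] L)
    (hK : ∀ x y z, 2 * b (A x y) z = b ⁅x, y⁆ z + b ⁅z, x⁆ y + b ⁅z, y⁆ x) :
    ∀ X Y Z : L, ⁅A X Y, Z⁆ + ⁅X, A Z Y⁆ = 0 :=
  example_R3_pseudo_riemannian_general L b e lam horth hspan h12 h13 h23 A hK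
end

section
/- Let 𝔤* be a Lie algebra with nondegenerate symmetric bilinear form a, A its infinitesimal Levi-Civita connection, and B, a^c the lifted connection and complete form on 𝔤* ⋉ 𝔤*. Then B is metric with respect to a^c: a^c(B_{(α,β)}(α',β'), (α'',β'')) + a^c((α',β'), B_{(α,β)}(α'',β'')) = 0 for all elements of 𝔤* × 𝔤*. -/
/-!
Polarising the Koszul formula in its last two arguments makes the right-hand side cancel by
skew-symmetry of the bracket, so `A_α` is skew-adjoint for `a`. The lifted form pairs the first
component of one argument with the second of the other, and every term of
`a^c(B_p q, r) + a^c(q, B_p r)` is matched with its partner in one of three instances of this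
skew-adjointness.
-/

section Koszul

variable {R L : Type*} [CommRing R] [LieRing L] [LieAlgebra R L]

theorem LinearMap.apply_lie_swap_left (a : L →ₗ[R] L →ₗ[R] R) (x y z : L) :
    a ⁅y, x⁆ z = -a ⁅x, y⁆ z := by
  rw [← lie_skew x y, map_neg, LinearMap.neg_apply, neg_neg]

theorem skewAdjoint_of_koszul [NoZeroDivisors R] [NeZero (2 : R)] (a : L →ₗ[R] L →ₗ[R] R)
    (hsymm : ∀ x y, a x y = a y x) (A : L →ₗ[R] L →ₗ[R] L)
    (hK : ∀ α β γ, 2 * a (A α β) γ = a ⁅α, β⁆ γ + a ⁅γ, α⁆ β + a ⁅γ, β⁆ α) (α β γ : L) :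
    a (A α β) γ + a β (A α γ) = 0 := by
  have h : 2 * (a (A α β) γ + a β (A α γ)) = 0 := by
    linear_combination hK α β γ + hK α γ β + 2 * hsymm β (A α γ)
      + a.apply_lie_swap_left α β γ + a.apply_lie_swap_left α γ β
      + a.apply_lie_swap_left γ β α
  exact (mul_eq_zero.1 h).resolve_left two_ne_zero

end Koszul

theorem completeLift_skewAdjoint {R M : Type*} [CommRing R] [AddCommGroup M] [Module R M]
    (a : M →ₗ[R] M →ₗ[R] R) (hsymm : ∀ x y, a x y = a y x) (A : M →ₗ[R] M →ₗ[R] M)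
    (hA : ∀ α β γ, a (A α β) γ + a β (A α γ) = 0) (p q r : M × M) :
    a (A p.1 q.2 + A p.2 q.1) r.2 + a (A p.2 q.2) r.1
      + (a q.1 (A p.2 r.2) + a q.2 (A p.1 r.2 + A p.2 r.1)) = 0 := by
  simp only [map_add, LinearMap.add_apply]
  linear_combination hA p.1 q.2 r.2 + hA p.2 q.2 r.1 + hA p.2 r.2 q.1
    + hsymm (A p.2 q.1) r.2 - hsymm (A p.2 r.2) q.1

theorem lifted_connection_metric_general
    (L : Type*) [LieRing L] [LieAlgebra ℝ L]
    (a : L →ₗ[ℝ] L →ₗ[ℝ] ℝ)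
    (hsymm : ∀ x y, a x y = a y x)
    (A : L →ₗ[ℝ] L →ₗ[ℝ] L)
    (hK : ∀ α β γ, 2 * a (A α β) γ = a ⁅α, β⁆ γ + a ⁅γ, α⁆ β + a ⁅γ, β⁆ α) :
    let ac : L × L → L × L → ℝ := fun p q => a p.1 q.2 + a p.2 q.1
    let B : L × L → L × L → L × L :=
      fun p q => (A p.1 q.2 + A p.2 q.1, A p.2 q.2)
    ∀ p q r : L × L, ac (B p q) r + ac q (B p r) = 0 := by
  intro ac B p q r
  exact completeLift_skewAdjoint a hsymm A (skewAdjoint_of_koszul a hsymm A hK) p q r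

/-- The lifted connection `B` on `𝔤* ⋉ 𝔤*` is metric with respect to the
complete lift form `a^c`. -/
theorem lifted_connection_metric
    (L : Type*) [LieRing L] [LieAlgebra ℝ L]
    (a : L →ₗ[ℝ] L →ₗ[ℝ] ℝ)
    (hsymm : ∀ x y, a x y = a y x)
    (hnd : ∀ x, (∀ y, a x y = 0) → x = 0)
    (A : L →ₗ[ℝ] L →ₗ[ℝ] L)
    (hK : ∀ α β γ, 2 * a (A α β) γ = a ⁅α, β⁆ γ + a ⁅γ, α⁆ β + a ⁅γ, β⁆ α) :
    let ac : L × L → L × L → ℝ := fun p q => a p.1 q.2 + a p.2 q.1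
    let B : L × L → L × L → L × L :=
      fun p q => (A p.1 q.2 + A p.2 q.1, A p.2 q.2)
    ∀ p q r : L × L, ac (B p q) r + ac q (B p r) = 0 :=
  lifted_connection_metric_general L a hsymm A hK
end

section
/- Let (𝔤*,[·,·],a) be a pseudo-Riemannian Lie algebra with infinitesimal Levi-Civita connection A, i.e. [A_α β, γ] + [α, A_γ β] = 0 for all α,β,γ. Then on the semidirect product 𝔤* ⋉ 𝔤* with the complete form a^c and lifted connection B, the triple (𝔤* ⋉ 𝔤*, [·,·]_{𝔤*⋉𝔤*}, a^c) satisfies [B_{(α,β)}(α',β'), (α'',β'')]_{𝔤*⋉𝔤*} + [(α,β), B_{(α'',β'')}(α',β')]_{𝔤*⋉𝔤*} = 0 for all triples; i.e. it is also a pseudo-Riemannian Lie algebra. -/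
namespace DualSemidirect

variable {L : Type*} [LieRing L]

/-- The bracket of `L ⋉ L`, the first factor being the abelian ideal on which `L` acts adjointly. -/
def bracket (p q : L × L) : L × L :=
  (⁅p.1, q.2⁆ + ⁅p.2, q.1⁆, ⁅p.2, q.2⁆)

def liftedConnection (A : L → L → L) (p q : L × L) : L × L :=
  (A p.1 q.2 + A p.2 q.1, A p.2 q.2)

/-- The pseudo-Riemannian condition relating a bracket and an infinitesimal connection. -/
def IsCompatible {M : Type*} [Add M] [Zero M] (br A : M → M → M) : Prop :=
  ∀ x y z, br (A x y) z + br x (A z y) = 0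

/-- Once the bracket is distributed over the sums defining the lift, the first component regroups
into three instances of the compatibility on `L` and the second component is a fourth. -/
theorem isCompatible_liftedConnection {A : L → L → L}
    (hA : IsCompatible (fun x y : L => ⁅x, y⁆) A) :
    IsCompatible bracket (liftedConnection A) := by
  rintro ⟨p₁, p₂⟩ ⟨q₁, q₂⟩ ⟨r₁, r₂⟩
  have h₁ := hA p₁ q₂ r₂
  have h₂ := hA p₂ q₁ r₂
  have h₃ := hA p₂ q₂ r₁
  have h₄ := hA p₂ q₂ r₂
  simp only [bracket, liftedConnection, add_lie, lie_add, Prod.mk_add_mk, Prod.mk_eq_zero]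
  constructor
  · calc ⁅A p₁ q₂, r₂⁆ + ⁅A p₂ q₁, r₂⁆ + ⁅A p₂ q₂, r₁⁆
          + (⁅p₁, A r₂ q₂⁆ + (⁅p₂, A r₁ q₂⁆ + ⁅p₂, A r₂ q₁⁆))
        = (⁅A p₁ q₂, r₂⁆ + ⁅p₁, A r₂ q₂⁆) + (⁅A p₂ q₁, r₂⁆ + ⁅p₂, A r₂ q₁⁆)
          + (⁅A p₂ q₂, r₁⁆ + ⁅p₂, A r₁ q₂⁆) := by abel
      _ = 0 := by rw [h₁, h₂, h₃]; abel
  · exact h₄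

end DualSemidirect

theorem dual_semidirect_pseudo_riemannian_general
    (L : Type*) [LieRing L] [LieAlgebra ℝ L]
    (A : L →ₗ[ℝ] L →ₗ[ℝ] L)
    (hpr : ∀ α β γ : L, ⁅A α β, γ⁆ + ⁅α, A γ β⁆ = 0) :
    let br : L × L → L × L → L × L :=
      fun p q => (⁅p.1, q.2⁆ + ⁅p.2, q.1⁆, ⁅p.2, q.2⁆)
    let B : L × L → L × L → L × L :=
      fun p q => (A p.1 q.2 + A p.2 q.1, A p.2 q.2)
    ∀ p q r : L × L, br (B p q) r + br p (B r q) = 0 :=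
  DualSemidirect.isCompatible_liftedConnection (A := fun x y => A x y) hpr

/-- If `(𝔤*,[·,·],a)` is a pseudo-Riemannian Lie algebra, then
`(𝔤* ⋉ 𝔤*, [·,·]_{⋉}, a^c)` with the lifted connection `B` is also a
pseudo-Riemannian Lie algebra:
`[B_{(α,β)}(α',β'),(α'',β'')] + [(α,β), B_{(α'',β'')}(α',β')] = 0`. -/
theorem dual_semidirect_pseudo_riemannian
    (L : Type*) [LieRing L] [LieAlgebra ℝ L]
    (a : L →ₗ[ℝ] L →ₗ[ℝ] ℝ)
    (hsymm : ∀ x y, a x y = a y x)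
    (hnd : ∀ x, (∀ y, a x y = 0) → x = 0)
    (A : L →ₗ[ℝ] L →ₗ[ℝ] L)
    (hK : ∀ α β γ, 2 * a (A α β) γ = a ⁅α, β⁆ γ + a ⁅γ, α⁆ β + a ⁅γ, β⁆ α)
    (hpr : ∀ α β γ : L, ⁅A α β, γ⁆ + ⁅α, A γ β⁆ = 0) :
    let br : L × L → L × L → L × L :=
      fun p q => (⁅p.1, q.2⁆ + ⁅p.2, q.1⁆, ⁅p.2, q.2⁆)
    let B : L × L → L × L → L × L :=
      fun p q => (A p.1 q.2 + A p.2 q.1, A p.2 q.2)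
    ∀ p q r : L × L, br (B p q) r + br p (B r q) = 0 :=
  dual_semidirect_pseudo_riemannian_general L A hpr
end
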